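/- arXiv:2511.12235 — 4 statements merged into one kernel-verified Lean document; each statement's English description precedes it below -/
import Mathlib

section
/- Under the assumptions that tan(φ - γ₁) = (s sin φ - n_y b)/(s cos φ - n_x a), tan(φ - γ₂) = (s sin φ - n_y b)/(s cos φ - (n_x+1)a), sin(γ₁ - γ₂) ≠ 0, and the relevant cosines are nonzero, one has s sin φ - n_y b = a · sin(φ - γ₂) sin(φ - γ₁) / sin(γ₁ - γ₂). -/
open Real

/-- `s sin φ - n_y b = a · sin (φ - γ₂) sin (φ - γ₁) / sin (γ₁ - γ₂)`. -/
theorem sin_phi_ny_b (s a b φ γ₁ γ₂ : ℝ) (nx ny : ℤ)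
    (hs : 0 < s) (ha : 0 < a) (hb : 0 < b)
    (hN : s * Real.sin φ - (ny : ℝ) * b ≠ 0)
    (hD1 : s * Real.cos φ - (nx : ℝ) * a ≠ 0)
    (hD2 : s * Real.cos φ - ((nx : ℝ) + 1) * a ≠ 0)
    (hc1 : Real.cos (φ - γ₁) ≠ 0) (hc2 : Real.cos (φ - γ₂) ≠ 0)
    (hsin : Real.sin (γ₁ - γ₂) ≠ 0)
    (hγ1 : Real.tan (φ - γ₁) =
      (s * Real.sin φ - (ny : ℝ) * b) / (s * Real.cos φ - (nx : ℝ) * a))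
    (hγ2 : Real.tan (φ - γ₂) =
      (s * Real.sin φ - (ny : ℝ) * b) / (s * Real.cos φ - ((nx : ℝ) + 1) * a)) :
    s * Real.sin φ - (ny : ℝ) * b =
      a * (Real.sin (φ - γ₂) * Real.sin (φ - γ₁)) / Real.sin (γ₁ - γ₂) := by
  rw [Real.tan_eq_sin_div_cos] at hγ1 hγ2
  rw [div_eq_div_iff hc1 hD1] at hγ1
  rw [div_eq_div_iff hc2 hD2] at hγ2
  have key : (s * Real.sin φ - (ny : ℝ) * b) * Real.sin (γ₁ - γ₂) =
      a * (Real.sin (φ - γ₂) * Real.sin (φ - γ₁)) := by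
    have h : γ₁ - γ₂ = (φ - γ₂) - (φ - γ₁) := by ring
    rw [h, Real.sin_sub]
    linear_combination Real.sin (φ - γ₁) * hγ2 - Real.sin (φ - γ₂) * hγ1
  field_simp
  linarith [key]
end

section
/- Under the same assumptions as in the previous relation (tangent characterizations of γ₁ and γ₂ for the vertices (n_x a, n_y b) and ((n_x+1)a, n_y b), sin(γ₁ - γ₂) ≠ 0), one has s cos φ - n_x a = a · sin(φ - γ₂) cos(φ - γ₁) / sin(γ₁ - γ₂). -/
open Real

/-! If the two base vertices of a triangle lie at horizontal offsets `x` and `y` from the apex, at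
common height `h` below it, the base angles satisfy `tan α = h / x` and `tan β = h / y`. Then
`sin (β - α) = cos α cos β · h (x - y) / (x y)` and `(x - y) sin β cos α = cos α cos β · h (x - y) / y`,
whose quotient is `x`: the law of sines in the triangle, read off horizontally. -/

namespace Real

variable {α β h x y : ℝ}

theorem sin_eq_cos_mul_of_tan_eq {t : ℝ} (hc : cos α ≠ 0) (ht : tan α = t) :
    sin α = cos α * t := by
  rw [← ht, ← tan_mul_cos hc, mul_comm]

theorem sin_sub_eq_of_tan_eq_div (hcα : cos α ≠ 0) (hcβ : cos β ≠ 0)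
    (hα : tan α = h / x) (hβ : tan β = h / y) (hx : x ≠ 0) (hy : y ≠ 0) :
    sin (β - α) = cos α * cos β * h * (x - y) / (x * y) := by
  rw [sin_sub, sin_eq_cos_mul_of_tan_eq hcα hα, sin_eq_cos_mul_of_tan_eq hcβ hβ]
  field_simp

theorem eq_sub_mul_sin_mul_cos_div_sin_sub (hcα : cos α ≠ 0) (hcβ : cos β ≠ 0)
    (hα : tan α = h / x) (hβ : tan β = h / y) (hx : x ≠ 0) (hy : y ≠ 0)
    (hsin : sin (β - α) ≠ 0) :
    x = (x - y) * (sin β * cos α) / sin (β - α) := by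
  rw [eq_div_iff hsin, sin_sub_eq_of_tan_eq_div hcα hcβ hα hβ hx hy,
    sin_eq_cos_mul_of_tan_eq hcβ hβ]
  field_simp

end Real

theorem cos_phi_nx_a_general (s a b φ γ₁ γ₂ : ℝ) (nx ny : ℤ)
    (hD1 : s * Real.cos φ - (nx : ℝ) * a ≠ 0)
    (hD2 : s * Real.cos φ - ((nx : ℝ) + 1) * a ≠ 0)
    (hc1 : Real.cos (φ - γ₁) ≠ 0) (hc2 : Real.cos (φ - γ₂) ≠ 0)
    (hsin : Real.sin (γ₁ - γ₂) ≠ 0)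
    (hγ1 : Real.tan (φ - γ₁) =
      (s * Real.sin φ - (ny : ℝ) * b) / (s * Real.cos φ - (nx : ℝ) * a))
    (hγ2 : Real.tan (φ - γ₂) =
      (s * Real.sin φ - (ny : ℝ) * b) / (s * Real.cos φ - ((nx : ℝ) + 1) * a)) :
    s * Real.cos φ - (nx : ℝ) * a =
      a * (Real.sin (φ - γ₂) * Real.cos (φ - γ₁)) / Real.sin (γ₁ - γ₂) := by
  have hangle : (φ - γ₂) - (φ - γ₁) = γ₁ - γ₂ := by ring
  have hbase : (s * cos φ - nx * a) - (s * cos φ - (nx + 1) * a) = a := by ring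
  have hoffset := eq_sub_mul_sin_mul_cos_div_sin_sub hc1 hc2 hγ1 hγ2 hD1 hD2 (hangle ▸ hsin)
  rwa [hangle, hbase] at hoffset

/-- `s cos φ - n_x a = a · sin (φ - γ₂) cos (φ - γ₁) / sin (γ₁ - γ₂)`. -/
theorem cos_phi_nx_a (s a b φ γ₁ γ₂ : ℝ) (nx ny : ℤ)
    (hs : 0 < s) (ha : 0 < a) (hb : 0 < b)
    (hN : s * Real.sin φ - (ny : ℝ) * b ≠ 0)
    (hD1 : s * Real.cos φ - (nx : ℝ) * a ≠ 0)
    (hD2 : s * Real.cos φ - ((nx : ℝ) + 1) * a ≠ 0)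
    (hc1 : Real.cos (φ - γ₁) ≠ 0) (hc2 : Real.cos (φ - γ₂) ≠ 0)
    (hsin : Real.sin (γ₁ - γ₂) ≠ 0)
    (hγ1 : Real.tan (φ - γ₁) =
      (s * Real.sin φ - (ny : ℝ) * b) / (s * Real.cos φ - (nx : ℝ) * a))
    (hγ2 : Real.tan (φ - γ₂) =
      (s * Real.sin φ - (ny : ℝ) * b) / (s * Real.cos φ - ((nx : ℝ) + 1) * a)) :
    s * Real.cos φ - (nx : ℝ) * a =
      a * (Real.sin (φ - γ₂) * Real.cos (φ - γ₁)) / Real.sin (γ₁ - γ₂) :=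
  cos_phi_nx_a_general s a b φ γ₁ γ₂ nx ny hD1 hD2 hc1 hc2 hsin hγ1 hγ2
end

section
/- Under the same assumptions, s cos φ - (n_x+1)a = a · cos(φ - γ₂) sin(φ - γ₁) / sin(γ₁ - γ₂). -/
open Real

/-- `s cos φ - (n_x + 1) a = a · cos (φ - γ₂) sin (φ - γ₁) / sin (γ₁ - γ₂)`. -/
theorem cos_phi_nx1_a (s a b φ γ₁ γ₂ : ℝ) (nx ny : ℤ)
    (hs : 0 < s) (ha : 0 < a) (hb : 0 < b)
    (hN : s * Real.sin φ - (ny : ℝ) * b ≠ 0)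
    (hD1 : s * Real.cos φ - (nx : ℝ) * a ≠ 0)
    (hD2 : s * Real.cos φ - ((nx : ℝ) + 1) * a ≠ 0)
    (hc1 : Real.cos (φ - γ₁) ≠ 0) (hc2 : Real.cos (φ - γ₂) ≠ 0)
    (hsin : Real.sin (γ₁ - γ₂) ≠ 0)
    (hγ1 : Real.tan (φ - γ₁) =
      (s * Real.sin φ - (ny : ℝ) * b) / (s * Real.cos φ - (nx : ℝ) * a))
    (hγ2 : Real.tan (φ - γ₂) =
      (s * Real.sin φ - (ny : ℝ) * b) / (s * Real.cos φ - ((nx : ℝ) + 1) * a)) :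
    s * Real.cos φ - ((nx : ℝ) + 1) * a =
      a * (Real.cos (φ - γ₂) * Real.sin (φ - γ₁)) / Real.sin (γ₁ - γ₂) := by
  have hs1 : Real.sin (φ - γ₁) =
      (s * Real.sin φ - (ny : ℝ) * b) / (s * Real.cos φ - (nx : ℝ) * a) * Real.cos (φ - γ₁) := by
    rw [← hγ1, Real.tan_mul_cos hc1]
  have hs2 : Real.sin (φ - γ₂) =
      (s * Real.sin φ - (ny : ℝ) * b) / (s * Real.cos φ - ((nx : ℝ) + 1) * a) *
        Real.cos (φ - γ₂) := by
    rw [← hγ2, Real.tan_mul_cos hc2]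
  have hd : γ₁ - γ₂ = (φ - γ₂) - (φ - γ₁) := by ring
  have hsin' : Real.sin (γ₁ - γ₂) =
      Real.sin (φ - γ₂) * Real.cos (φ - γ₁) - Real.cos (φ - γ₂) * Real.sin (φ - γ₁) := by
    rw [hd, Real.sin_sub]
  have key : Real.sin (γ₁ - γ₂) =
      Real.cos (φ - γ₁) * Real.cos (φ - γ₂) * (s * Real.sin φ - (ny : ℝ) * b) * a /
        ((s * Real.cos φ - (nx : ℝ) * a) * (s * Real.cos φ - ((nx : ℝ) + 1) * a)) := by
    rw [hsin', hs1, hs2]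
    field_simp
    ring
  rw [key]
  rw [hs1]
  field_simp
end

section
/- Consider the triangle with vertices V = ((n_x+1)a, n_y b), P_x = ((n_x+1)a, s sin φ - (s cos φ - (n_x+1)a) tan(φ-β)), and P_y = (s cos φ - (s sin φ - n_y b) cot(φ-β), n_y b). Its area equals (a²/|sin(2φ - 2β)|) · (sin(φ-γ₁) sin(β-γ₂) / sin(γ₁-γ₂))², where γ₁, γ₂ are defined by tan(φ-γ₁) = (s sin φ - n_y b)/(s cos φ - n_x a) and tan(φ-γ₂) = (s sin φ - n_y b)/(s cos φ - (n_x+1)a). -/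
open Real

/-- Area of the right triangle with right-angle corner `V = ((n_x+1) a, n_y b)`
cut off by the ray at angle `β`:
`(1/2)|V P_x| |V P_y| = (a² / |sin (2φ - 2β)|) (sin (φ-γ₁) sin (β-γ₂) / sin (γ₁-γ₂))²`. -/
theorem triangle_area (s a b φ β γ₁ γ₂ : ℝ) (nx ny : ℤ)
    (hs : 0 < s) (ha : 0 < a) (hb : 0 < b)
    (hN : s * Real.sin φ - (ny : ℝ) * b ≠ 0)
    (hD1 : s * Real.cos φ - (nx : ℝ) * a ≠ 0)
    (hD2 : s * Real.cos φ - ((nx : ℝ) + 1) * a ≠ 0)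
    (hc1 : Real.cos (φ - γ₁) ≠ 0) (hc2 : Real.cos (φ - γ₂) ≠ 0)
    (hcβ : Real.cos (φ - β) ≠ 0) (hsβ : Real.sin (φ - β) ≠ 0)
    (h2 : Real.sin (2 * φ - 2 * β) ≠ 0)
    (hsin : Real.sin (γ₁ - γ₂) ≠ 0)
    (hγ1 : Real.tan (φ - γ₁) =
      (s * Real.sin φ - (ny : ℝ) * b) / (s * Real.cos φ - (nx : ℝ) * a))
    (hγ2 : Real.tan (φ - γ₂) =
      (s * Real.sin φ - (ny : ℝ) * b) / (s * Real.cos φ - ((nx : ℝ) + 1) * a)) :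
    (1 / 2) *
      |(ny : ℝ) * b -
        (s * Real.sin φ - (s * Real.cos φ - ((nx : ℝ) + 1) * a) * Real.tan (φ - β))| *
      |((nx : ℝ) + 1) * a -
        (s * Real.cos φ -
          (s * Real.sin φ - (ny : ℝ) * b) * (Real.cos (φ - β) / Real.sin (φ - β)))| =
    (a ^ 2 / |Real.sin (2 * φ - 2 * β)|) *
      (Real.sin (φ - γ₁) * Real.sin (β - γ₂) / Real.sin (γ₁ - γ₂)) ^ 2 := by
  set N := s * Real.sin φ - (ny : ℝ) * b with hNdef
  set D1 := s * Real.cos φ - (nx : ℝ) * a with hD1def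
  set D2 := s * Real.cos φ - ((nx : ℝ) + 1) * a with hD2def
  have haD : a = D1 - D2 := by rw [hD1def, hD2def]; ring
  rw [Real.tan_eq_sin_div_cos] at hγ1 hγ2
  rw [div_eq_div_iff hc1 hD1] at hγ1
  rw [div_eq_div_iff hc2 hD2] at hγ2
  have hA : Real.sin (γ₁ - γ₂) =
      Real.sin (φ - γ₂) * Real.cos (φ - γ₁) -
        Real.cos (φ - γ₂) * Real.sin (φ - γ₁) := by
    rw [show γ₁ - γ₂ = (φ - γ₂) - (φ - γ₁) by ring, Real.sin_sub]
  have hB : Real.sin (β - γ₂) =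
      Real.sin (φ - γ₂) * Real.cos (φ - β) -
        Real.cos (φ - γ₂) * Real.sin (φ - β) := by
    rw [show β - γ₂ = (φ - γ₂) - (φ - β) by ring, Real.sin_sub]
  have hC : Real.sin (2 * φ - 2 * β) = 2 * Real.sin (φ - β) * Real.cos (φ - β) := by
    rw [show 2 * φ - 2 * β = 2 * (φ - β) by ring, Real.sin_two_mul]
  rw [hA] at hsin
  rw [hA, hB, hC, Real.tan_eq_sin_div_cos]
  set s1 := Real.sin (φ - γ₁) with hs1def
  set c1 := Real.cos (φ - γ₁) with hc1def
  set s2 := Real.sin (φ - γ₂) with hs2def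
  set c2 := Real.cos (φ - γ₂) with hc2def
  set sβ := Real.sin (φ - β) with hsβdef
  set cβ := Real.cos (φ - β) with hcβdef
  set L := N * cβ - D2 * sβ with hLdef
  have hs1' : s1 = N * c1 / D1 := (eq_div_iff hD1).mpr hγ1
  have hs2' : s2 = N * c2 / D2 := (eq_div_iff hD2).mpr hγ2
  have key : s1 * (s2 * cβ - c2 * sβ) * a = L * (s2 * c1 - c2 * s1) := by
    rw [hs1', hs2', haD, hLdef]
    field_simp
  have hrat : s1 * (s2 * cβ - c2 * sβ) / (s2 * c1 - c2 * s1) = L / a := by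
    rw [div_eq_div_iff hsin (ne_of_gt ha)]
    exact key
  rw [hrat]
  -- now handle the left side
  have hX : (ny : ℝ) * b - (s * Real.sin φ - D2 * (sβ / cβ)) = -N + D2 * sβ / cβ := by
    rw [hNdef]; ring
  have hY : ((nx : ℝ) + 1) * a - (s * Real.cos φ - N * (cβ / sβ)) =
      -D2 + N * cβ / sβ := by
    rw [hD2def]; ring
  rw [hX, hY]
  have hXY : (-N + D2 * sβ / cβ) * (-D2 + N * cβ / sβ) = -(L ^ 2) / (sβ * cβ) := by
    rw [hLdef]; field_simp; ring
  calc (1 / 2) * |-N + D2 * sβ / cβ| * |-D2 + N * cβ / sβ|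
      = |(-N + D2 * sβ / cβ) * (-D2 + N * cβ / sβ)| / 2 := by
        rw [abs_mul]; ring
    _ = L ^ 2 / (|sβ| * |cβ|) / 2 := by
        rw [hXY, abs_div, abs_neg, abs_mul, abs_of_nonneg (sq_nonneg L)]
    _ = a ^ 2 / |2 * sβ * cβ| * (L / a) ^ 2 := by
        rw [abs_mul, abs_mul, abs_two, div_pow]
        have h1 : |sβ| ≠ 0 := abs_ne_zero.mpr hsβ
        have h2' : |cβ| ≠ 0 := abs_ne_zero.mpr hcβ
        field_simp
end
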